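/- Let ᾱ : {0,1,...,n} → (0,1] be strictly decreasing. Define for each i the DDIM coefficient λ_i = √(1 - ᾱ_i) - √(ᾱ_i(1 - ᾱ_{i-1})/ᾱ_{i-1}). Suppose noise predictions at consecutive steps satisfy ‖ε_i - ε'_i‖ ≤ δ for all i, where ε_i is used in the exact update and ε'_i in the approximate update, both applied with the map x ↦ √(ᾱ_i/ᾱ_{i-1})·x + λ-terms. Then the accumulated deviation after n steps between the exact and approximate trajectories starting from the same x₀ is at most δ·∑_{i=1}^n (∏_{j=i+1}^n √(ᾱ_j/ᾱ_{j-1}))·λ_i. -/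

import Mathlib

/-!
The difference `X i - Y i` of the two trajectories satisfies the perturbed linear recursion
`X i - Y i = c i • (X (i-1) - Y (i-1)) + λ i • (ε i - ε' i)` with `c i = √(ᾱ i / ᾱ (i-1))`.
Since `c i ≥ 0` and `λ i ≥ 0` (the latter because `ᾱ` decreases), the norms `d i = ‖X i - Y i‖`
obey `d i ≤ c i * d (i-1) + λ i * δ`, and a discrete Grönwall (variation of constants) argument
bounds `d n` by the solution of the corresponding recursion with equality, started at `d 0 = 0`.
-/

open Finset

/-- The value at step `n` of the solution of `a k = c k * a (k - 1) + b k`, `a 0 = 0`. -/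
def accumulated (c b : ℕ → ℝ) (n : ℕ) : ℝ :=
  ∑ i ∈ Icc 1 n, (∏ j ∈ Icc (i + 1) n, c j) * b i

@[simp]
theorem accumulated_zero (c b : ℕ → ℝ) : accumulated c b 0 = 0 := by
  simp [accumulated]

theorem accumulated_succ (c b : ℕ → ℝ) (k : ℕ) :
    accumulated c b (k + 1) = c (k + 1) * accumulated c b k + b (k + 1) := by
  have hlast : Icc (k + 1 + 1) (k + 1) = ∅ := Icc_eq_empty (by omega)
  rw [accumulated, accumulated, sum_Icc_succ_top (by omega), hlast, prod_empty, one_mul,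
    mul_sum]
  congr 1
  refine sum_congr rfl fun i hi => ?_
  rw [prod_Icc_succ_top (by simp only [mem_Icc] at hi; omega)]
  ring

theorem le_accumulated_of_le_mul_add {c b d : ℕ → ℝ} {n : ℕ}
    (hc : ∀ k < n, 0 ≤ c (k + 1)) (hd0 : d 0 = 0)
    (hd : ∀ k < n, d (k + 1) ≤ c (k + 1) * d k + b (k + 1)) :
    d n ≤ accumulated c b n := by
  induction n with
  | zero => simp [hd0]
  | succ k ih =>
    have ih := ih (fun i hi => hc i (by omega)) (fun i hi => hd i (by omega))
    calc d (k + 1) ≤ c (k + 1) * d k + b (k + 1) := hd k k.lt_succ_self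
      _ ≤ c (k + 1) * accumulated c b k + b (k + 1) := by
          gcongr
          exact hc k k.lt_succ_self
      _ = accumulated c b (k + 1) := (accumulated_succ c b k).symm

theorem norm_smul_add_smul_sub_smul_add_smul_le {𝕜 V : Type*} [NormedField 𝕜]
    [SeminormedAddCommGroup V] [NormedSpace 𝕜 V] (c l : 𝕜) (x y e e' : V) :
    ‖(c • x + l • e) - (c • y + l • e')‖ ≤ ‖c‖ * ‖x - y‖ + ‖l‖ * ‖e - e'‖ := by
  calc ‖(c • x + l • e) - (c • y + l • e')‖ = ‖c • (x - y) + l • (e - e')‖ := by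
        rw [smul_sub, smul_sub, add_sub_add_comm]
    _ ≤ ‖c‖ * ‖x - y‖ + ‖l‖ * ‖e - e'‖ := by
        grw [norm_add_le, norm_smul, norm_smul]

theorem sqrt_mul_one_sub_div_le_sqrt_one_sub {a b : ℝ} (ha : 0 < a) (hba : b ≤ a) :
    Real.sqrt (b * (1 - a) / a) ≤ Real.sqrt (1 - b) := by
  refine Real.sqrt_le_sqrt ?_
  rw [div_le_iff₀ ha]
  nlinarith

open Finset in
theorem ddim_error_propagation
    {V : Type*} [NormedAddCommGroup V] [NormedSpace ℝ V]
    (n : ℕ) (αbar : ℕ → ℝ)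
    (hmem : ∀ i ≤ n, 0 < αbar i ∧ αbar i ≤ 1)
    (hdec : ∀ i < n, αbar (i + 1) < αbar i)
    (lam : ℕ → ℝ)
    (hlam : ∀ i, lam i
      = Real.sqrt (1 - αbar i) - Real.sqrt (αbar i * (1 - αbar (i - 1)) / αbar (i - 1)))
    (ε ε' : ℕ → V) (δ : ℝ)
    (hδ : ∀ i, 1 ≤ i → i ≤ n → ‖ε i - ε' i‖ ≤ δ)
    (X Y : ℕ → V) (x₀ : V)
    (hX0 : X 0 = x₀) (hY0 : Y 0 = x₀)
    (hX : ∀ i < n, X (i + 1)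
      = Real.sqrt (αbar (i + 1) / αbar i) • X i + lam (i + 1) • ε (i + 1))
    (hY : ∀ i < n, Y (i + 1)
      = Real.sqrt (αbar (i + 1) / αbar i) • Y i + lam (i + 1) • ε' (i + 1)) :
    ‖X n - Y n‖
      ≤ δ * ∑ i ∈ Icc 1 n,
          (∏ j ∈ Icc (i + 1) n, Real.sqrt (αbar j / αbar (j - 1))) * lam i := by
  have hlam_nonneg : ∀ k < n, 0 ≤ lam (k + 1) := fun k hk => by
    rw [hlam, Nat.add_sub_cancel, sub_nonneg]
    exact sqrt_mul_one_sub_div_le_sqrt_one_sub (hmem k hk.le).1 (hdec k hk).le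
  have hstep : ∀ k < n, ‖X (k + 1) - Y (k + 1)‖
      ≤ Real.sqrt (αbar (k + 1) / αbar k) * ‖X k - Y k‖ + lam (k + 1) * δ := fun k hk => by
    rw [hX k hk, hY k hk]
    grw [norm_smul_add_smul_sub_smul_add_smul_le, Real.norm_of_nonneg (Real.sqrt_nonneg _),
      Real.norm_of_nonneg (hlam_nonneg k hk), hδ (k + 1) (by omega) hk]
    exact hlam_nonneg k hk
  have hbound := le_accumulated_of_le_mul_add (d := fun k => ‖X k - Y k‖)
    (c := fun j => Real.sqrt (αbar j / αbar (j - 1))) (b := fun i => lam i * δ)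
    (fun k _ => Real.sqrt_nonneg _) (by simp [hX0, hY0]) hstep
  refine hbound.trans_eq ?_
  rw [accumulated, mul_sum]
  exact sum_congr rfl fun i _ => by ring
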